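/- arXiv:1010.3049 — 2 statements merged into one kernel-verified Lean document; each statement's English description precedes it below -/
import Mathlib

section
/- Let X : Ω → ℝ³ satisfy X(iw) = Λ·X(w) and X(\bar{w}) = T·X(w) on a domain Ω stable under multiplication by i and conjugation. Then the images X({t+it : t ∈ ℝ} ∩ Ω) and X({t−it : t ∈ ℝ} ∩ Ω) are contained in two perpendicular lines of ℝ³, namely {(0,y,y)} and {(0,y,−y)}, whose direction vectors (0,1,1) and (0,1,−1) are orthogonal. -/
open Complex Matrix

/-- forward direction of Proposition 2.9: a self-CPG symmetry
forces the surface to contain two perpendicular straight lines {(0,y,y)} and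
{(0,y,−y)} as images of the diagonals of the parameter domain. -/
theorem stmt9 (Ω : Set ℂ)
    (hstabI : ∀ w ∈ Ω, Complex.I * w ∈ Ω)
    (hstabC : ∀ w ∈ Ω, (starRingEnd ℂ) w ∈ Ω)
    (X : ℂ → Fin 3 → ℝ)
    (hL : ∀ w ∈ Ω, X (Complex.I * w) =
      (!![(-1:ℝ),0,0; 0,0,-1; 0,1,0]).mulVec (X w))
    (hT : ∀ w ∈ Ω, X ((starRingEnd ℂ) w) =
      (!![(1:ℝ),0,0; 0,1,0; 0,0,-1]).mulVec (X w)) :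
    (∀ t : ℝ, (1 + Complex.I) * (t : ℂ) ∈ Ω →
      ∃ y : ℝ, X ((1 + Complex.I) * (t : ℂ)) = ![0, y, y]) ∧
    (∀ t : ℝ, (1 - Complex.I) * (t : ℂ) ∈ Ω →
      ∃ y : ℝ, X ((1 - Complex.I) * (t : ℂ)) = ![0, y, -y]) ∧
    ![(0:ℝ), 1, 1] ⬝ᵥ ![0, 1, -1] = 0 := by
  refine ⟨?_, ?_, by simp [dotProduct, Fin.sum_univ_three]⟩
  · intro t ht
    set w : ℂ := (1 + Complex.I) * (t : ℂ) with hw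
    have hc : (starRingEnd ℂ) w ∈ Ω := hstabC w ht
    have h1 := hT w ht
    have h2 := hL _ hc
    have hiw : Complex.I * ((starRingEnd ℂ) w) = w := by
      have : (starRingEnd ℂ) w = (1 - Complex.I) * (t : ℂ) := by
        rw [hw]; simp [Complex.ext_iff]
      rw [this, hw]
      have hI : Complex.I * Complex.I = -1 := Complex.I_mul_I
      ring_nf
      rw [Complex.I_sq]
      ring
    rw [hiw, h1] at h2
    have h0 := congrFun h2 0
    have ha := congrFun h2 1
    have hb := congrFun h2 2
    simp [Matrix.mulVec, dotProduct, Fin.sum_univ_three,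
      Matrix.vecHead, Matrix.vecTail] at h0 ha hb
    refine ⟨X w 1, ?_⟩
    funext i
    fin_cases i <;>
      simp [Matrix.cons_val_zero, Matrix.cons_val_one, Matrix.head_cons] <;>
      linarith
  · intro t ht
    set w : ℂ := (1 - Complex.I) * (t : ℂ) with hw
    have h1 := hT w ht
    have h2 := hL w ht
    have hiw : Complex.I * w = (starRingEnd ℂ) w := by
      have : (starRingEnd ℂ) w = (1 + Complex.I) * (t : ℂ) := by
        rw [hw]; simp [Complex.ext_iff]
      rw [this, hw]
      ring_nf
      rw [Complex.I_sq]
      ring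
    rw [hiw, h1] at h2
    have h0 := congrFun h2 0
    have ha := congrFun h2 1
    have hb := congrFun h2 2
    simp [Matrix.mulVec, dotProduct, Fin.sum_univ_three,
      Matrix.vecHead, Matrix.vecTail] at h0 ha hb
    refine ⟨X w 1, ?_⟩
    funext i
    fin_cases i <;>
      simp [Matrix.cons_val_zero, Matrix.cons_val_one, Matrix.head_cons] <;>
      linarith
end

section
/- If f : Ω → ℂ³ is holomorphic on a domain Ω stable under w ↦ ρw (ρ = e^{iπ/4}) and w ↦ \bar{w}, and satisfies f(ρw) = R·f(w) and f(\bar{w}) = T·conj(f(w)) with R = [[i,0,0],[0,1/√2,−1/√2],[0,1/√2,1/√2]] and T = diag(1,1,−1), then the transformation group generated by these two symmetries is dihedral of order 16; in particular (ρ, R) has order 8, (τ, T∘conj) has order 2, and conjugating (ρ,R) by (τ,T∘conj) inverts it. -/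
open Complex Matrix


private def dphiFun {G : Type*} [Group G] (a b : G) : DihedralGroup 8 → G
  | .r i => a ^ (i.val : ℤ)
  | .sr i => b * a ^ (i.val : ℤ)

lemma dihedral_aux {G : Type*} [Group G] (a b : G) (ha : orderOf a = 8)
    (hb : orderOf b = 2) (hrel : b * a * b = a⁻¹) :
    Nonempty ((Subgroup.closure {a, b} : Subgroup G) ≃* DihedralGroup 8) := by
  have hb2 : b * b = 1 := by
    have := pow_orderOf_eq_one b; rwa [hb, pow_two] at this
  have hbinv : b⁻¹ = b := by
    rw [← mul_one b⁻¹, ← hb2, ← mul_assoc, inv_mul_cancel, one_mul]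
  have hconj : ∀ m : ℤ, b * a ^ m * b = a ^ (-m) := by
    intro m
    have h1 : b * a * b⁻¹ = a⁻¹ := by rw [hbinv]; exact hrel
    calc b * a ^ m * b = (b * a * b⁻¹) ^ m := by rw [conj_zpow, hbinv]
      _ = a ^ (-m) := by rw [h1, ← _root_.zpow_neg_one, ← _root_.zpow_mul, neg_one_mul]
  have hswap : ∀ m : ℤ, a ^ m * b = b * a ^ (-m) := by
    intro m
    calc a ^ m * b = b * (b * a ^ m * b) := by
          rw [← mul_assoc, ← mul_assoc, hb2, one_mul]
      _ = b * a ^ (-m) := by rw [hconj m]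
  have hc : ∀ i : ZMod 8, ((i.val : ℤ) : ZMod 8) = i := by
    intro i; push_cast; exact ZMod.natCast_rightInverse i
  have key : ∀ m n : ℤ, ((m : ZMod 8) = (n : ZMod 8)) → a ^ m = a ^ n := by
    intro m n h
    rw [zpow_eq_zpow_iff_modEq, ha]
    exact (ZMod.intCast_eq_intCast_iff m n 8).mp h
  let φ : DihedralGroup 8 →* G :=
    { toFun := dphiFun a b
      map_one' := by
        show a ^ (((0 : ZMod 8)).val : ℤ) = 1
        simp
      map_mul' := by
        rintro (i | i) (j | j)
        · show a ^ (((i + j)).val : ℤ) = a ^ ((i).val : ℤ) * a ^ ((j).val : ℤ)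
          rw [← _root_.zpow_add]
          exact key _ _ (by push_cast [hc]; ring)
        · show b * a ^ (((j - i)).val : ℤ) = a ^ ((i).val : ℤ) * (b * a ^ ((j).val : ℤ))
          rw [← mul_assoc, hswap, mul_assoc]
          congr 1
          rw [← _root_.zpow_add]
          exact key _ _ (by push_cast [hc]; ring)
        · show b * a ^ (((i + j)).val : ℤ) = b * a ^ ((i).val : ℤ) * a ^ ((j).val : ℤ)
          rw [mul_assoc, ← _root_.zpow_add]
          congr 1
          exact key _ _ (by push_cast [hc]; ring)
        · show a ^ (((j - i)).val : ℤ) = b * a ^ ((i).val : ℤ) * (b * a ^ ((j).val : ℤ))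
          rw [mul_assoc, ← mul_assoc (a ^ ((i).val : ℤ)), hswap, ← mul_assoc, ← mul_assoc,
            hb2, one_mul, ← _root_.zpow_add]
          exact key _ _ (by push_cast [hc]; ring)
  }
  have hinj : Function.Injective φ := by
    rw [injective_iff_map_eq_one]
    rintro (i | i) h
    · have h1 : a ^ ((i).val : ℤ) = 1 := h
      have h8 : ((orderOf a : ℕ) : ℤ) ∣ (i.val : ℤ) := orderOf_dvd_iff_zpow_eq_one.mpr h1
      rw [ha] at h8
      have hlt : i.val < 8 := ZMod.val_lt i
      have hv : i.val = 0 := by omega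
      have : i = 0 := (ZMod.val_eq_zero i).mp hv
      rw [this, DihedralGroup.one_def]
    · exfalso
      have h1 : b * a ^ ((i).val : ℤ) = 1 := h
      have hb' : b = a ^ (-(i.val : ℤ)) := by
        rw [_root_.zpow_neg]; exact eq_inv_of_mul_eq_one_left h1
      have e1 : a ^ (-(2 * (i.val : ℤ))) = 1 := by
        rw [hb'] at hb2
        rw [← hb2]; group
      have e2 : a ^ (2 - 2 * (i.val : ℤ)) = 1 := by
        rw [hb'] at hrel
        have := congrArg (fun x => x * a) hrel
        simp only [inv_mul_cancel] at this
        rw [← this]; group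
      have d1 := orderOf_dvd_iff_zpow_eq_one.mpr e1
      have d2 := orderOf_dvd_iff_zpow_eq_one.mpr e2
      rw [ha] at d1 d2
      omega
  have hrange : φ.range = Subgroup.closure {a, b} := by
    apply le_antisymm
    · rintro x ⟨y, rfl⟩
      have hamem : a ∈ Subgroup.closure {a, b} := Subgroup.subset_closure (by simp)
      have hbmem : b ∈ Subgroup.closure {a, b} := Subgroup.subset_closure (by simp)
      cases y with
      | r i => exact zpow_mem hamem _
      | sr i => exact mul_mem hbmem (zpow_mem hamem _)
    · rw [Subgroup.closure_le]
      rintro x hx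
      simp only [Set.mem_insert_iff, Set.mem_singleton_iff] at hx
      rcases hx with rfl | rfl
      · exact ⟨.r 1, by show dphiFun x b (.r 1) = x; norm_num [dphiFun, show ((1 : ZMod 8)).val = 1 from rfl]⟩
      · exact ⟨.sr 0, by show dphiFun a x (.sr 0) = x; simp [dphiFun]⟩
  exact ⟨((MonoidHom.ofInjective hinj).trans (MulEquiv.subgroupCongr hrange)).symm⟩

/-- for a self-adjoint minimal surface arising from a self-CPG
curve, the symmetries (w,z) ↦ (ρw, Rz) and (w,z) ↦ (conj w, T·conj z) of the
graph of the isotropic curve generate a dihedral group of order 16. -/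
theorem stmt12 (Ω : Set ℂ)
    (hstabρ : ∀ w ∈ Ω, Complex.exp (Real.pi * Complex.I / 4) * w ∈ Ω)
    (hstabC : ∀ w ∈ Ω, (starRingEnd ℂ) w ∈ Ω)
    (f : ℂ → Fin 3 → ℂ) (hf : DifferentiableOn ℂ f Ω)
    (R : Matrix (Fin 3) (Fin 3) ℂ)
    (hR : R = !![Complex.I, 0, 0;
        0, 1 / Real.sqrt 2, -(1 / Real.sqrt 2);
        0, 1 / Real.sqrt 2, 1 / Real.sqrt 2])
    (hρ : ∀ w ∈ Ω, f (Complex.exp (Real.pi * Complex.I / 4) * w) = R.mulVec (f w))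
    (hT : ∀ w ∈ Ω, f ((starRingEnd ℂ) w) =
      (!![(1:ℂ),0,0; 0,1,0; 0,0,-1]).mulVec (fun i => (starRingEnd ℂ) (f w i))) :
    ∀ A B : Equiv.Perm (ℂ × (Fin 3 → ℂ)),
      (⇑A = fun p => (Complex.exp (Real.pi * Complex.I / 4) * p.1, R.mulVec p.2)) →
      (⇑B = fun p => ((starRingEnd ℂ) p.1,
        (!![(1:ℂ),0,0; 0,1,0; 0,0,-1]).mulVec (fun i => (starRingEnd ℂ) (p.2 i)))) →
      orderOf A = 8 ∧ orderOf B = 2 ∧ B * A * B = A⁻¹ ∧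
      Nonempty ((Subgroup.closure {A, B} : Subgroup (Equiv.Perm (ℂ × (Fin 3 → ℂ))))
        ≃* DihedralGroup 8) := by
  intro A B hA hB
  set ρ : ℂ := Complex.exp (Real.pi * Complex.I / 4) with hρdef
  have hρ4 : ρ ^ 4 = -1 := by
    rw [hρdef, ← Complex.exp_nat_mul]
    rw [show ((4:ℕ):ℂ) * (Real.pi * Complex.I / 4) = Real.pi * Complex.I by push_cast; ring]
    exact Complex.exp_pi_mul_I
  have hρ8 : ρ ^ 8 = 1 := by
    rw [show ρ^8 = (ρ^4)^2 by ring, hρ4]; norm_num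
  have hρc : (starRingEnd ℂ) ρ * ρ = 1 := by
    rw [hρdef, ← Complex.exp_conj, ← Complex.exp_add, ← Complex.exp_zero]
    congr 1
    simp [map_div₀, Complex.conj_ofReal, Complex.conj_I, map_ofNat]
    ring
  have hs : ((Real.sqrt 2 : ℝ) : ℂ) * ((Real.sqrt 2 : ℝ) : ℂ) = 2 := by
    rw [← Complex.ofReal_mul, Real.mul_self_sqrt (by norm_num)]; norm_num
  have hs0 : ((Real.sqrt 2 : ℝ) : ℂ) ≠ 0 := by
    simp [Real.sqrt_eq_zero']
  have hR2 : R * R = !![(-1:ℂ),0,0; 0,0,-1; 0,1,0] := by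
    rw [hR, Matrix.mul_fin_three]
    norm_num [Complex.I_mul_I]
    field_simp
    rw [sq, hs]; norm_num
  have hR4 : R * R * (R * R) = !![(1:ℂ),0,0; 0,-1,0; 0,0,-1] := by
    rw [hR2, Matrix.mul_fin_three]; norm_num
  have hR8 : R * R * (R * R) * (R * R * (R * R)) = 1 := by
    rw [hR4, Matrix.mul_fin_three]
    norm_num
    exact Matrix.one_fin_three.symm
  have hR8p : R ^ 8 = 1 := by
    rw [show (8:ℕ) = 2*2*2 by norm_num, pow_mul, pow_mul]
    simp only [pow_two]
    exact hR8
  have happ : ∀ p : ℂ × (Fin 3 → ℂ), A p = (ρ * p.1, R.mulVec p.2) := fun p => by rw [hA]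
  have hBapp : ∀ p : ℂ × (Fin 3 → ℂ), B p = ((starRingEnd ℂ) p.1,
      (!![(1:ℂ),0,0; 0,1,0; 0,0,-1]).mulVec (fun i => (starRingEnd ℂ) (p.2 i))) :=
    fun p => by rw [hB]
  have hAiter : ∀ (n : ℕ) (p : ℂ × (Fin 3 → ℂ)),
      (A ^ n) p = (ρ ^ n * p.1, (R ^ n).mulVec p.2) := by
    intro n
    induction n with
    | zero => intro p; simp [Matrix.one_mulVec]
    | succ n ih =>
      intro p
      rw [pow_succ, Equiv.Perm.mul_apply, happ, ih]
      simp only [Matrix.mulVec_mulVec]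
      rw [pow_succ, pow_succ]
      refine Prod.ext (by ring) rfl
  have hA8 : A ^ 8 = 1 := by
    apply Equiv.ext
    intro p
    rw [hAiter, hρ8, hR8p, one_mul, Matrix.one_mulVec, Equiv.Perm.one_apply]
  have hA4 : ¬ A ^ (2 ^ 2) = 1 := by
    intro h
    have h2 := congrArg
      (fun σ : Equiv.Perm (ℂ × (Fin 3 → ℂ)) => (σ ((1:ℂ), (0 : Fin 3 → ℂ))).1) h
    simp only [hAiter, Equiv.Perm.one_apply] at h2
    rw [show ((2:ℕ)^2) = 4 by norm_num, hρ4] at h2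
    norm_num at h2
  have hOA : orderOf A = 8 := by
    have h38 : (2:ℕ) ^ 3 = 8 := by norm_num
    have := orderOf_eq_prime_pow (x := A) hA4 (by rw [h38]; exact hA8)
    rw [this, h38]
  have hB2 : B ^ 2 = 1 := by
    apply Equiv.ext
    intro p
    rw [pow_two]
    simp only [Equiv.Perm.mul_apply, Equiv.Perm.one_apply, hBapp]
    refine Prod.ext (by simp) ?_
    show (!![(1:ℂ),0,0; 0,1,0; 0,0,-1]).mulVec (fun i => (starRingEnd ℂ)
      (((!![(1:ℂ),0,0; 0,1,0; 0,0,-1]).mulVec (fun j => (starRingEnd ℂ) (p.2 j))) i)) = p.2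
    funext i
    fin_cases i <;>
      simp [Matrix.mulVec, dotProduct, Fin.sum_univ_succ]
  have hBne : B ≠ 1 := by
    intro h
    have h2 := congrArg
      (fun σ : Equiv.Perm (ℂ × (Fin 3 → ℂ)) => (σ ((Complex.I:ℂ), (0 : Fin 3 → ℂ))).1) h
    simp only [hBapp, Equiv.Perm.one_apply, Complex.conj_I] at h2
    exact Complex.I_ne_zero (by linear_combination -h2/2)
  have hOB : orderOf B = 2 := orderOf_eq_prime hB2 hBne
  have hvec : ∀ v : Fin 3 → ℂ,
      (!![(1:ℂ),0,0; 0,1,0; 0,0,-1]).mulVec (fun i => (starRingEnd ℂ)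
        ((R.mulVec ((!![(1:ℂ),0,0; 0,1,0; 0,0,-1]).mulVec
          (fun j => (starRingEnd ℂ) ((R.mulVec v) j)))) i)) = v := by
    intro v
    rw [hR]
    funext i
    fin_cases i
    · simp [Matrix.mulVec, dotProduct, Fin.sum_univ_succ, Complex.conj_ofReal, map_div₀]
      linear_combination (-(v 0)) * Complex.I_sq
    · simp [Matrix.mulVec, dotProduct, Fin.sum_univ_succ, Complex.conj_ofReal, map_div₀]
      field_simp
      linear_combination (-(v 1)) * hs
    · simp [Matrix.mulVec, dotProduct, Fin.sum_univ_succ, Complex.conj_ofReal, map_div₀]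
      field_simp
      linear_combination (-(v 2)) * hs
  have hrel : B * A * B = A⁻¹ := by
    apply eq_inv_of_mul_eq_one_left
    apply Equiv.ext
    intro p
    simp only [Equiv.Perm.mul_apply, Equiv.Perm.one_apply, happ, hBapp]
    refine Prod.ext ?_ ?_
    · show (starRingEnd ℂ) (ρ * (starRingEnd ℂ) (ρ * p.1)) = p.1
      rw [_root_.map_mul, Complex.conj_conj]
      linear_combination p.1 * hρc
    · exact hvec p.2
  exact ⟨hOA, hOB, hrel, dihedral_aux A B hOA hOB hrel⟩
end
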